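/- arXiv:1801.06376 — 2 statements merged into one kernel-verified Lean document; each statement's English description precedes it below -/
import Mathlib

section
/- Let H be a Hilbert space and v_1, …, v_N bounded operators on H with Σ_{s=1}^N v_s v_s* = 1 and v_s v_s v_s* v_s* = v_s v_s* for all s. Then v_{s₂}* v_{s₁}* = 0 (equivalently v_{s₁} v_{s₂} = 0) for all s₁ ≠ s₂. -/
open ContinuousLinearMap

/-! Since `∑ vₛ vₛ* = 1`, the map `w ↦ (vₛ* w)ₛ` is an isometry, so
`‖v_{s₁}* w‖² = ∑ₛ ‖vₛ* v_{s₁}* w‖²`. The relation `vₛ vₛ (vₛ vₛ)* = vₛ vₛ*` says that `(vₛ vₛ)*`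
and `vₛ*` have the same norm on every vector, so the term `s = s₁` of that sum is already the whole
left side, and every other term vanishes. -/

section

variable {𝕜 E : Type*} [RCLike 𝕜] [NormedAddCommGroup E] [InnerProductSpace 𝕜 E] [CompleteSpace E]

theorem ContinuousLinearMap.norm_adjoint_apply_sq (T : E →L[𝕜] E) (x : E) :
    ‖adjoint T x‖ ^ 2 = RCLike.re (inner 𝕜 x ((T * adjoint T) x)) := by
  simpa using apply_norm_sq_eq_inner_adjoint_right (adjoint T) x

theorem ContinuousLinearMap.norm_adjoint_apply_eq_of_mul_adjoint_eq {A B : E →L[𝕜] E}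
    (h : A * adjoint A = B * adjoint B) (x : E) : ‖adjoint A x‖ = ‖adjoint B x‖ := by
  have hsq := norm_adjoint_apply_sq A x
  rw [h, ← norm_adjoint_apply_sq] at hsq
  exact (pow_left_inj₀ (norm_nonneg _) (norm_nonneg _) two_ne_zero).mp hsq

theorem ContinuousLinearMap.sum_norm_adjoint_apply_sq {ι : Type*} [Fintype ι]
    {v : ι → E →L[𝕜] E} (h : ∑ s, v s * adjoint (v s) = 1) (x : E) :
    ∑ s, ‖adjoint (v s) x‖ ^ 2 = ‖x‖ ^ 2 := by
  simp only [norm_adjoint_apply_sq, ← map_sum, ← inner_sum, ← sum_apply, h]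
  exact (norm_sq_eq_re_inner x).symm

end

theorem eq_zero_of_sum_norm_sq_eq_norm_sq {ι E : Type*} [Fintype ι] [NormedAddCommGroup E]
    {x : ι → E} {t : ι} (h : ∑ s, ‖x s‖ ^ 2 = ‖x t‖ ^ 2) {s : ι} (hs : s ≠ t) : x s = 0 := by
  classical
  rw [← Finset.add_sum_erase _ _ (Finset.mem_univ t), add_eq_left,
    Finset.sum_eq_zero_iff_of_nonneg fun _ _ => by positivity] at h
  simpa using h s (Finset.mem_erase.mpr ⟨hs, Finset.mem_univ s⟩)

/-- For bounded operators on a Hilbert space with `∑ vₛ vₛ* = 1` and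
`vₛ vₛ vₛ* vₛ* = vₛ vₛ*`, the products `v_{s₂}* v_{s₁}*` vanish for `s₁ ≠ s₂`. -/
theorem adjoint_products_vanish
    {H : Type*} [NormedAddCommGroup H] [InnerProductSpace ℂ H] [CompleteSpace H]
    (N : ℕ) (v : Fin N → (H →L[ℂ] H))
    (hsum : ∑ s, v s * adjoint (v s) = 1)
    (hfour : ∀ s, v s * v s * adjoint (v s) * adjoint (v s) = v s * adjoint (v s)) :
    ∀ s₁ s₂, s₁ ≠ s₂ →
      adjoint (v s₂) * adjoint (v s₁) = 0 ∧ v s₁ * v s₂ = 0 := by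
  intro s₁ s₂ hne
  have hadj_sq : adjoint (v s₁ * v s₁) = adjoint (v s₁) * adjoint (v s₁) := star_mul _ _
  have hnorm_sq : ∀ w, ‖adjoint (v s₁ * v s₁) w‖ = ‖adjoint (v s₁) w‖ :=
    norm_adjoint_apply_eq_of_mul_adjoint_eq (by rw [hadj_sq, ← mul_assoc, hfour])
  have hadj : adjoint (v s₂) * adjoint (v s₁) = 0 := by
    refine ContinuousLinearMap.ext fun w => ?_
    have hsum_w := sum_norm_adjoint_apply_sq hsum (adjoint (v s₁) w)
    rw [← hnorm_sq w, hadj_sq, mul_apply_eq_comp] at hsum_w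
    exact eq_zero_of_sum_norm_sq_eq_norm_sq hsum_w hne.symm
  refine ⟨hadj, ?_⟩
  rw [← star_eq_adjoint, ← star_eq_adjoint, ← star_mul, star_eq_zero] at hadj
  exact hadj
end

section
/- Let A be a *-algebra and v = (v_{ij})_{1≤i,j≤2} a 2×2 matrix over A such that every row and column sums to 1 and additionally v_{s1} v_{s1}* + v_{s2} v_{s2}* = 1 for s = 1, 2. Then Σ_{s=1}^{2} v_{s t₁} v_{s t₂}* = 0 for t₁ ≠ t₂. -/
/-!
Constant row and column sums force `v = !![a, b; b, a]`, so both off-diagonal column sums equal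
`a b* + b a*`. Expanding `(a + b)(a + b)* = 1` and subtracting `a a* + b b* = 1` shows that
this cross term vanishes.
-/

theorem Matrix.fin_two_entries_eq_of_row_col_sums {A : Type*} [AddCancelCommMonoid A]
    (v : Matrix (Fin 2) (Fin 2) A) {e : A}
    (hrow : ∀ i, v i 0 + v i 1 = e) (hcol : ∀ j, v 0 j + v 1 j = e) :
    v 1 0 = v 0 1 ∧ v 1 1 = v 0 0 := by
  have hc : v 1 0 = v 0 1 := add_left_cancel ((hcol 0).trans (hrow 0).symm)
  refine ⟨hc, add_left_cancel (a := v 1 0) ?_⟩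
  rw [hrow 1, add_comm, ← hcol 0]

theorem mul_star_add_mul_star_eq_zero_of_add_eq_one {A : Type*} [Ring A] [StarRing A] {a b : A}
    (hsum : a + b = 1) (hnorm : a * star a + b * star b = 1) :
    a * star b + b * star a = 0 := by
  have hexpand : (a + b) * star (a + b) =
      a * star a + b * star b + (a * star b + b * star a) := by
    rw [star_add, mul_add, add_mul, add_mul]
    abel
  rw [hsum, star_one, mul_one, hnorm] at hexpand
  exact add_eq_left.mp hexpand.symm

/-- For a 2×2 matrix over a unital *-algebra whose rows and columns sum to 1 and
which satisfies `v_{s1} v_{s1}* + v_{s2} v_{s2}* = 1` for each row `s`, the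
off-diagonal column sums `∑ₛ v_{s t₁} v_{s t₂}*` vanish for `t₁ ≠ t₂`. -/
theorem two_by_two_off_diagonal_column_sums_vanish
    {A : Type*} [Ring A] [StarRing A] (v : Matrix (Fin 2) (Fin 2) A)
    (hrow : ∀ i, v i 0 + v i 1 = 1)
    (hcol : ∀ j, v 0 j + v 1 j = 1)
    (hdiag : ∀ s, v s 0 * star (v s 0) + v s 1 * star (v s 1) = 1) :
    ∀ t₁ t₂, t₁ ≠ t₂ → v 0 t₁ * star (v 0 t₂) + v 1 t₁ * star (v 1 t₂) = 0 := by
  obtain ⟨hc, hd⟩ := v.fin_two_entries_eq_of_row_col_sums hrow hcol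
  have hcross := mul_star_add_mul_star_eq_zero_of_add_eq_one (hrow 0) (hdiag 0)
  simp only [Fin.forall_fin_two]
  refine ⟨⟨fun h => absurd rfl h, fun _ => ?_⟩, ⟨fun _ => ?_, fun h => absurd rfl h⟩⟩
  · simpa only [hc, hd] using hcross
  · simpa only [hc, hd, add_comm] using hcross
end
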